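/- arXiv:2407.11584 — 2 statements merged into one kernel-verified Lean document; each statement's English description precedes it below -/
import Mathlib

section
/- Let S ⊆ ℕ^d be a C-semigroup. Then S is almost symmetric (there exists a term order ⪯ and an element F ∈ H(S) with h ⪯ F for all h ∈ H(S), such that for every f ∈ PF(S) \ {F} there is g ∈ PF(S) with f + g = F) if and only if there exists F ∈ H(S) with h ≤_{C(S)} F for all h ∈ H(S) such that for every f ∈ PF(S) \ {F} there is g ∈ PF(S) with f + g = F. -/
/-! Common definitions for C-semigroups in `ℕ^d = Fin d → ℕ`. -/

/-- `x ≤_L y` iff `y = x + l` for some `l ∈ L`. -/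
def leL {M : Type*} [AddCommMonoid M] (L : Set M) (x y : M) : Prop :=
  ∃ l ∈ L, y = x + l

/-- Elements of `A` maximal with respect to `≤_L`. -/
def maximalsL {M : Type*} [AddCommMonoid M] (L A : Set M) : Set M :=
  {a | a ∈ A ∧ ∀ b ∈ A, leL L a b → a = b}

/-- The Apéry set of `S` with respect to `X`. -/
def aperySet {M : Type*} [AddCommMonoid M] (S : AddSubmonoid M) (X : Set M) : Set M :=
  {s | s ∈ S ∧ ¬ ∃ x ∈ X, ∃ t ∈ S, s = t + x}

/-- Integer points of the rational cone spanned by `S`. -/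
def coneSet {d : ℕ} (S : AddSubmonoid (Fin d → ℕ)) : Set (Fin d → ℕ) :=
  {x | ∃ (n : ℕ) (c : Fin n → ℚ) (s : Fin n → (Fin d → ℕ)),
      (∀ i, 0 ≤ c i) ∧ (∀ i, s i ∈ S) ∧ ∀ j, (x j : ℚ) = ∑ i, c i * (s i j : ℚ)}

/-- The set of gaps `H(S) = C(S) \ S`. -/
def gapSet {d : ℕ} (S : AddSubmonoid (Fin d → ℕ)) : Set (Fin d → ℕ) :=
  coneSet S \ (S : Set (Fin d → ℕ))

/-- Pseudo-Frobenius elements of `S`. -/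
def pseudoFrobenius {d : ℕ} (S : AddSubmonoid (Fin d → ℕ)) : Set (Fin d → ℕ) :=
  {h | h ∈ gapSet S ∧ ∀ s ∈ S, s ≠ 0 → h + s ∈ S}

/-- Special gaps of `S`. -/
def specialGaps {d : ℕ} (S : AddSubmonoid (Fin d → ℕ)) : Set (Fin d → ℕ) :=
  {h | h ∈ pseudoFrobenius S ∧ h + h ∈ S}

/-- The conductor of `S`. -/
def conductorSet {d : ℕ} (S : AddSubmonoid (Fin d → ℕ)) : Set (Fin d → ℕ) :=
  {s | s ∈ S ∧ ∀ c ∈ coneSet S, s + c ∈ S}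

/-- A relaxed monomial order on `ℕ^d`. -/
structure RelaxedMonomialOrder (d : ℕ) where
  le : (Fin d → ℕ) → (Fin d → ℕ) → Prop
  isLinearOrder : IsLinearOrder (Fin d → ℕ) le
  zero_le : ∀ v, le 0 v
  le_add_right : ∀ u v w, le u v → le u (v + w)

/-- A term order on `ℕ^d`. -/
structure TermOrderOn (d : ℕ) where
  le : (Fin d → ℕ) → (Fin d → ℕ) → Prop
  isLinearOrder : IsLinearOrder (Fin d → ℕ) le
  zero_le : ∀ v, le 0 v
  add_le_add_right : ∀ u v w, le u v → le (u + w) (v + w)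

/-- Frobenius allowable elements of a C-semigroup `S`. -/
def frobAllowable {d : ℕ} (S : AddSubmonoid (Fin d → ℕ)) : Set (Fin d → ℕ) :=
  {h | h ∈ gapSet S ∧ ∃ o : RelaxedMonomialOrder d, ∀ x ∈ gapSet S, o.le x h}

/-- Pseudo-Frobenius elements, complement version (for generalized numerical semigroups). -/
def PFmonoid {M : Type*} [AddCommMonoid M] (S : AddSubmonoid M) : Set M :=
  {h | h ∉ S ∧ ∀ s ∈ S, s ≠ 0 → h + s ∈ S}

/-- Conductor, complement version (for generalized numerical semigroups). -/
def conductorMonoid {M : Type*} [AddCommMonoid M] (S : AddSubmonoid M) : Set M :=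
  {s | s ∈ S ∧ ∀ n : M, s + n ∈ S}

/-- Frobenius allowable elements, complement version (for generalized numerical semigroups). -/
def FAmonoid {d : ℕ} (S : AddSubmonoid (Fin d → ℕ)) : Set (Fin d → ℕ) :=
  {h | h ∉ S ∧ ∃ o : RelaxedMonomialOrder d, ∀ x, x ∉ S → o.le x h}


private lemma stmt6_mem_coneSet_of_mem {d : ℕ} (S : AddSubmonoid (Fin d → ℕ)) {s : Fin d → ℕ}
    (hs : s ∈ S) : s ∈ coneSet S :=
  ⟨1, fun _ => 1, fun _ => s, fun _ => zero_le_one, fun _ => hs, fun j => by simp⟩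

private lemma stmt6_coneSet_add {d : ℕ} (S : AddSubmonoid (Fin d → ℕ)) {x y : Fin d → ℕ}
    (hx : x ∈ coneSet S) (hy : y ∈ coneSet S) : x + y ∈ coneSet S := by
  obtain ⟨n, c, s, hc, hs, hsum⟩ := hx
  obtain ⟨m, c', s', hc', hs', hsum'⟩ := hy
  refine ⟨n + m, Fin.append c c', Fin.append s s', ?_, ?_, ?_⟩
  · intro i
    refine Fin.addCases (fun j => ?_) (fun j => ?_) i <;>
      simp [Fin.append_left, Fin.append_right, hc _, hc' _]
  · intro i
    refine Fin.addCases (fun j => ?_) (fun j => ?_) i <;>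
      simp [Fin.append_left, Fin.append_right, hs _, hs' _]
  · intro j
    rw [Fin.sum_univ_add]
    simp only [Fin.append_left, Fin.append_right]
    rw [← hsum j, ← hsum' j]
    simp [Pi.add_apply]

private noncomputable def stmt6_lexInst (d : ℕ) :
    IsOrderedCancelAddMonoid (Lex (Fin d → ℕ)) := by
  haveI : WellFoundedLT (Fin d) := Finite.to_wellFoundedLT
  exact inferInstance

/-- The lexicographic order on `ℕ^d` as a term order. -/
noncomputable def stmt6_lexOrder (d : ℕ) : TermOrderOn d :=
  letI : WellFoundedLT (Fin d) := Finite.to_wellFoundedLT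
  letI := stmt6_lexInst d
  { le := fun u v => toLex u ≤ toLex v
    isLinearOrder :=
      { refl := fun a => le_refl (toLex a)
        trans := fun _ _ _ h1 h2 => le_trans h1 h2
        antisymm := fun _ _ h1 h2 => toLex.injective (le_antisymm h1 h2)
        total := fun a b => le_total (toLex a) (toLex b) }
    zero_le := fun v => Pi.toLex_monotone (fun i => Nat.zero_le _)
    add_le_add_right := fun u v w h => add_le_add_left h (toLex w) }

private lemma stmt6_gap_pf {d : ℕ} (S : AddSubmonoid (Fin d → ℕ))
    (hfin : (gapSet S).Finite) (o : TermOrderOn d) :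
    ∀ n (h : Fin d → ℕ), h ∈ gapSet S →
      ({g | g ∈ gapSet S ∧ o.le h g ∧ h ≠ g}).ncard ≤ n →
      ∃ f ∈ pseudoFrobenius S, ∃ s ∈ S, f = h + s := by
  haveI := o.isLinearOrder
  intro n
  induction n with
  | zero =>
    intro h hh hcard
    by_cases hpf : h ∈ pseudoFrobenius S
    · exact ⟨h, hpf, 0, S.zero_mem, (add_zero h).symm⟩
    · exfalso
      simp only [pseudoFrobenius, Set.mem_setOf_eq, hh, true_and] at hpf
      push_neg at hpf
      obtain ⟨s, hsS, hs0, hns⟩ := hpf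
      have hmem : h + s ∈ {g | g ∈ gapSet S ∧ o.le h g ∧ h ≠ g} := by
        refine ⟨⟨stmt6_coneSet_add S hh.1 (stmt6_mem_coneSet_of_mem S hsS), hns⟩, ?_, ?_⟩
        · have := o.add_le_add_right 0 s h (o.zero_le s)
          simpa [add_comm] using this
        · intro e
          exact hs0 (left_eq_add.mp e)
      have hfin' : {g | g ∈ gapSet S ∧ o.le h g ∧ h ≠ g}.Finite :=
        hfin.subset (fun g hg => hg.1)
      have : 0 < ({g | g ∈ gapSet S ∧ o.le h g ∧ h ≠ g}).ncard :=
        (Set.ncard_pos hfin').mpr ⟨_, hmem⟩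
      omega
  | succ n ih =>
    intro h hh hcard
    by_cases hpf : h ∈ pseudoFrobenius S
    · exact ⟨h, hpf, 0, S.zero_mem, (add_zero h).symm⟩
    · simp only [pseudoFrobenius, Set.mem_setOf_eq, hh, true_and] at hpf
      push_neg at hpf
      obtain ⟨s, hsS, hs0, hns⟩ := hpf
      have hgap : h + s ∈ gapSet S :=
        ⟨stmt6_coneSet_add S hh.1 (stmt6_mem_coneSet_of_mem S hsS), hns⟩
      have hstep : o.le h (h + s) := by
        have := o.add_le_add_right 0 s h (o.zero_le s)
        simpa [add_comm] using this
      have hne : h ≠ h + s := fun e => hs0 (left_eq_add.mp e)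
      have hsubset : {g | g ∈ gapSet S ∧ o.le (h + s) g ∧ h + s ≠ g}
          ⊆ {g | g ∈ gapSet S ∧ o.le h g ∧ h ≠ g} := by
        rintro g ⟨hg, hle', hne'⟩
        refine ⟨hg, trans_of o.le hstep hle', ?_⟩
        rintro rfl
        exact hne (antisymm_of o.le hstep hle')
      have hmem : h + s ∈ {g | g ∈ gapSet S ∧ o.le h g ∧ h ≠ g} := ⟨hgap, hstep, hne⟩
      have hss : {g | g ∈ gapSet S ∧ o.le (h + s) g ∧ h + s ≠ g}
          ⊂ {g | g ∈ gapSet S ∧ o.le h g ∧ h ≠ g} :=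
        (Set.ssubset_iff_of_subset hsubset).mpr ⟨h + s, hmem, fun hc => hc.2.2 rfl⟩
      have hlt := Set.ncard_lt_ncard hss (hfin.subset (fun g hg => hg.1))
      obtain ⟨f, hfPF, s', hs'S, hfs'⟩ := ih (h + s) hgap (by omega)
      exact ⟨f, hfPF, s + s', S.add_mem hsS hs'S, by rw [hfs', add_assoc]⟩

/-- A C-semigroup `S` is almost symmetric (with respect to some term order)
iff the analogous condition holds with the greatest gap for `≤_{C(S)}`. -/
theorem stmt6 {d : ℕ} (hd : 0 < d) (S : AddSubmonoid (Fin d → ℕ)) (hfg : S.FG)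
    (hfin : (gapSet S).Finite) :
    (∃ (o : TermOrderOn d) (F : Fin d → ℕ), F ∈ gapSet S ∧
        (∀ h ∈ gapSet S, o.le h F) ∧
        ∀ f ∈ pseudoFrobenius S, f ≠ F → ∃ g ∈ pseudoFrobenius S, f + g = F)
    ↔ (∃ F ∈ gapSet S, (∀ h ∈ gapSet S, leL (coneSet S) h F) ∧
        ∀ f ∈ pseudoFrobenius S, f ≠ F → ∃ g ∈ pseudoFrobenius S, f + g = F) := by
  constructor
  · rintro ⟨o, F, hF, hmax, hpf⟩
    refine ⟨F, hF, ?_, hpf⟩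
    intro h hh
    obtain ⟨f, hfPF, s, hsS, hfs⟩ := stmt6_gap_pf S hfin o _ h hh le_rfl
    by_cases hfF : f = F
    · exact ⟨s, stmt6_mem_coneSet_of_mem S hsS, by rw [← hfF, hfs]⟩
    · obtain ⟨g, hgPF, hfg⟩ := hpf f hfPF hfF
      refine ⟨s + g, stmt6_coneSet_add S (stmt6_mem_coneSet_of_mem S hsS) hgPF.1.1, ?_⟩
      rw [← hfg, hfs, add_assoc]
  · rintro ⟨F, hF, hle, hpf⟩
    refine ⟨stmt6_lexOrder d, F, hF, ?_, hpf⟩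
    intro h hh
    obtain ⟨l, hl, rfl⟩ := hle h hh
    haveI : WellFoundedLT (Fin d) := Finite.to_wellFoundedLT
    exact Pi.toLex_monotone le_self_add
end

section
/- Let S ⊆ ℕ^d be a C-semigroup. Then Maximals_{≤_{C(S)}} H(S) = PF(S) if and only if for every h ∈ H(S) there exists F ∈ Maximals_{≤_{C(S)}} H(S) with F − h ∈ S (i.e. F = h + s for some s ∈ S). -/
lemma mem_coneSet_of_mem' {d : ℕ} (S : AddSubmonoid (Fin d → ℕ)) {x : Fin d → ℕ}
    (hx : x ∈ S) : x ∈ coneSet S :=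
  ⟨1, fun _ => 1, fun _ => x, fun _ => zero_le_one, fun _ => hx, fun j => by simp⟩

lemma coneSet_add_mem' {d : ℕ} (S : AddSubmonoid (Fin d → ℕ)) {x y : Fin d → ℕ}
    (hx : x ∈ coneSet S) (hy : y ∈ S) : x + y ∈ coneSet S := by
  obtain ⟨n, c, s, hc, hs, hsum⟩ := hx
  refine ⟨n + 1, Fin.snoc c 1, Fin.snoc s y, ?_, ?_, ?_⟩
  · intro i; induction i using Fin.lastCases with
    | last => simp
    | cast i => simpa using hc i
  · intro i; induction i using Fin.lastCases with
    | last => simpa using hy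
    | cast i => simpa using hs i
  · intro j
    rw [Fin.sum_univ_castSucc]
    simp [← hsum j]

/-- Maximal gaps are always pseudo-Frobenius. -/
lemma maximals_subset_PF' {d : ℕ} (S : AddSubmonoid (Fin d → ℕ)) :
    maximalsL (coneSet S) (gapSet S) ⊆ pseudoFrobenius S := by
  rintro F ⟨hF, hmax⟩
  refine ⟨hF, fun s hs hs0 => ?_⟩
  by_contra hFs
  have hFsC : F + s ∈ coneSet S := coneSet_add_mem' S hF.1 hs
  have := hmax (F + s) ⟨hFsC, hFs⟩ ⟨s, mem_coneSet_of_mem' S hs, rfl⟩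
  exact hs0 (by simpa using (add_right_injective F this.symm))

/-- `Maximals_{≤_{C(S)}} H(S) = PF(S)` iff every gap is dominated by a
maximal gap through an element of `S`. -/
theorem stmt8 {d : ℕ} (hd : 0 < d) (S : AddSubmonoid (Fin d → ℕ)) (hfg : S.FG)
    (hfin : (gapSet S).Finite) :
    maximalsL (coneSet S) (gapSet S) = pseudoFrobenius S ↔
      ∀ h ∈ gapSet S, ∃ F ∈ maximalsL (coneSet S) (gapSet S), ∃ s ∈ S, F = h + s := by
  constructor
  · intro heq h hh
    -- the set of s ∈ S with h + s a gap
    set A : Set (Fin d → ℕ) := {s | s ∈ S ∧ h + s ∈ gapSet S} with hA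
    have hAfin : A.Finite := by
      have : A ⊆ (fun s => h + s) ⁻¹' gapSet S := fun s hs => hs.2
      exact Set.Finite.subset (hfin.preimage (add_right_injective h).injOn) this
    have hAne : A.Nonempty := ⟨0, S.zero_mem, by simpa using hh⟩
    obtain ⟨s, hsA, hsmax⟩ :=
      hAfin.exists_maximalFor (fun v => ∑ i, v i) A hAne
    have hPF : h + s ∈ pseudoFrobenius S := by
      refine ⟨hsA.2, fun t ht ht0 => ?_⟩
      by_contra hnot
      have hst : s + t ∈ A := by
        refine ⟨S.add_mem hsA.1 ht, ⟨?_, by rwa [← add_assoc]⟩⟩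
        rw [← add_assoc]
        exact coneSet_add_mem' S hsA.2.1 ht
      have hle : (∑ i, s i) ≤ ∑ i, (s + t) i := by
        simp only [Pi.add_apply, Finset.sum_add_distrib]
        exact Nat.le_add_right _ _
      have heq2 := hsmax hst hle
      have hts : (∑ i, t i) = 0 := by
        simp only [Pi.add_apply, Finset.sum_add_distrib] at heq2
        omega
      apply ht0
      funext i
      have := Finset.sum_eq_zero_iff.mp hts i (Finset.mem_univ i)
      simpa using this
    exact ⟨h + s, heq ▸ hPF, s, hsA.1, rfl⟩
  · intro hdom
    apply Set.Subset.antisymm (maximals_subset_PF' S)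
    intro h hh
    obtain ⟨F, hF, s, hs, hFs⟩ := hdom h hh.1
    rcases eq_or_ne s 0 with rfl | hs0
    · simpa [hFs] using hF
    · exact absurd (hFs ▸ hh.2 s hs hs0) hF.1.2
end
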